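/- arXiv:0907.2572 — 4 statements merged into one kernel-verified Lean document; each statement's English description precedes it below -/
import Mathlib

section
/- Let θ, ρ > 0. Let μ be the probability measure on ℕ × ℕ obtained as follows: draw T from Exp(1); given T, let X, Y, Z be independent with X ~ Poisson((θ/ρ)·e^{−ρT}), Y ~ Poisson((θ/ρ)·(1−e^{−ρT})), Z ~ Poisson((θ/ρ)·(1−e^{−ρT})); output (X+Y, X+Z). Then each marginal of μ is the Poisson distribution with mean θ/ρ (so each coordinate has mean and variance θ/ρ), and the covariance of the two coordinates under μ equals θ/(ρ(1+ρ)). (Proposition 4.2: in the infinitely many genes model with gene gain rate θ/2 and gene loss rate ρ/2 on the Kingman coalescent, the numbers of genes |𝒢_i|, |𝒢_j| of two sampled individuals have this joint law, where T is their coalescence time, X counts shared genes and Y, Z count private genes.) -/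
/-!
Conditionally on the coalescence time `t`, the pair is `(X + Y, X + Z)` with `X, Y, Z`
independent Poisson, and the shared and private rates `(θ/ρ)e^{-ρt}` and `(θ/ρ)(1 - e^{-ρt})`
add up to `θ/ρ`. Since Poisson laws are closed under convolution, each coordinate is `Po(θ/ρ)`
given `t`, hence also after mixing. For the covariance,
`E[(X + Y)(X + Z) | t] = (θ/ρ)² + Var X = (θ/ρ)² + (θ/ρ)e^{-ρt}`, where the Poisson second
moment comes from the size-bias identity `E[N f(N)] = r E[f(N + 1)]`, and `E[e^{-ρT}] = 1/(1 + ρ)`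
for `T ~ Exp(1)`.
-/

open MeasureTheory ProbabilityTheory
open scoped ENNReal NNReal

open Real Nat

namespace MeasureTheory.Measure

variable {α β γ : Type*} [MeasurableSpace α] [MeasurableSpace β] [MeasurableSpace γ]

lemma map_bind {m : Measure α} {κ : α → Measure β} (hκ : Measurable κ) {f : β → γ}
    (hf : Measurable f) : (m.bind κ).map f = m.bind fun t => (κ t).map f := by
  rw [bind, bind, ← join_map_map hf, map_map (measurable_map f hf) hκ]
  rfl

lemma map_bind_of_ae_map_eq {m : Measure α} [IsProbabilityMeasure m] {κ : α → Measure β}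
    (hκ : Measurable κ) {f : β → γ} (hf : Measurable f) {ν : Measure γ}
    (h : ∀ᵐ t ∂m, (κ t).map f = ν) : (m.bind κ).map f = ν := by
  rw [map_bind hκ hf, bind_congr_right (g := fun _ => ν) h, bind_const, measure_univ, one_smul]

end MeasureTheory.Measure

lemma MeasureTheory.integral_natCast_eq_toReal_lintegral {Ω : Type*} [MeasurableSpace Ω]
    {P : Measure Ω} {f : Ω → ℕ} (hf : Measurable f) :
    ∫ ω, (f ω : ℝ) ∂P = (∫⁻ ω, f ω ∂P).toReal := by
  rw [integral_eq_lintegral_of_nonneg_ae (ae_of_all _ fun _ => Nat.cast_nonneg _) (by fun_prop)]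
  simp_rw [ENNReal.ofReal_natCast]

lemma Real.toNNReal_mul_add_toNNReal_mul_one_sub {c x : ℝ} (hc : 0 ≤ c) (hx₀ : 0 ≤ x)
    (hx₁ : x ≤ 1) : (c * x).toNNReal + (c * (1 - x)).toNNReal = c.toNNReal := by
  rw [← Real.toNNReal_add (by positivity) (mul_nonneg hc (by linarith))]
  ring_nf

lemma Real.exp_neg_mul_mem_Icc {ρ t : ℝ} (hρ : 0 ≤ ρ) (ht : 0 ≤ t) :
    exp (-ρ * t) ∈ Set.Icc 0 1 :=
  ⟨(exp_pos _).le, exp_le_one_iff.mpr (by nlinarith)⟩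

namespace ProbabilityTheory

lemma measurable_poissonMeasure : Measurable poissonMeasure := by
  refine Measure.measurable_of_measurable_coe _ fun s hs => ?_
  simp_rw [poissonMeasure, Measure.sum_apply _ hs, Measure.smul_apply, smul_eq_mul]
  refine Measurable.tsum fun n => Measurable.mul_const ?_ _
  exact ENNReal.measurable_ofReal.comp (by fun_prop)

lemma lintegral_poissonMeasure (r : ℝ≥0) (f : ℕ → ℝ≥0∞) :
    ∫⁻ n, f n ∂poissonMeasure r = ∑' n, f n * ENNReal.ofReal (exp (-r) * r ^ n / n !) := by
  simp_rw [lintegral_countable', poissonMeasure_singleton]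

lemma lintegral_natCast_mul_poissonMeasure (r : ℝ≥0) (f : ℕ → ℝ≥0∞) :
    ∫⁻ n, n * f n ∂poissonMeasure r = r * ∫⁻ n, f (n + 1) ∂poissonMeasure r := by
  have weight (n : ℕ) : ((n + 1 : ℕ) : ℝ≥0∞) * ENNReal.ofReal (exp (-r) * r ^ (n + 1) / (n + 1)!)
      = r * ENNReal.ofReal (exp (-r) * r ^ n / n !) := by
    rw [← ENNReal.ofReal_natCast, ← ENNReal.ofReal_coe_nnreal, ← ENNReal.ofReal_mul (by positivity),
      ← ENNReal.ofReal_mul (by positivity), Nat.factorial_succ]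
    congr 1
    push_cast
    field_simp
    ring
  rw [lintegral_poissonMeasure, lintegral_poissonMeasure, tsum_eq_zero_add' ENNReal.summable,
    ← ENNReal.tsum_mul_left]
  simp only [Nat.cast_zero, zero_mul, zero_add]
  congr 1 with n
  rw [mul_right_comm, weight]
  ring

lemma lintegral_natCast_poissonMeasure (r : ℝ≥0) :
    ∫⁻ n, (n : ℝ≥0∞) ∂poissonMeasure r = r := by
  simpa using lintegral_natCast_mul_poissonMeasure r 1

lemma integral_natCast_poissonMeasure (r : ℝ≥0) :
    ∫ n, (n : ℝ) ∂poissonMeasure r = r := by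
  rw [integral_natCast_eq_toReal_lintegral (f := fun n => n) measurable_id,
    lintegral_natCast_poissonMeasure,
    ENNReal.coe_toReal]

lemma HasLaw.integral_natCast_of_poissonMeasure {Ω : Type*} [MeasurableSpace Ω]
    {P : Measure Ω} {X : Ω → ℕ} {r : ℝ≥0} (hX : HasLaw X (poissonMeasure r) P) :
    ∫ ω, (X ω : ℝ) ∂P = r :=
  (hX.integral_comp (by fun_prop)).trans (integral_natCast_poissonMeasure r)

lemma lintegral_natCast_add_poissonMeasure (r : ℝ≥0) (x : ℝ≥0∞) :
    ∫⁻ n, (n + x) ∂poissonMeasure r = r + x := by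
  rw [lintegral_add_right _ measurable_const, lintegral_const, measure_univ, mul_one,
    lintegral_natCast_poissonMeasure]

lemma ae_nonneg_gammaMeasure (a r : ℝ) : ∀ᵐ t ∂gammaMeasure a r, 0 ≤ t := by
  simp only [ae_iff, not_le]
  exact (withDensity_apply _ measurableSet_Iio).trans (lintegral_gammaPDF_of_nonpos le_rfl)

lemma lintegral_exp_neg_mul_expMeasure {r s : ℝ} (hr : 0 < r) (hrs : 0 < r + s) :
    ∫⁻ t, ENNReal.ofReal (exp (-s * t)) ∂expMeasure r = ENNReal.ofReal (r / (r + s)) := by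
  have density (t : ℝ) : exponentialPDF r t * ENNReal.ofReal (exp (-s * t))
      = ENNReal.ofReal (r / (r + s)) * exponentialPDF (r + s) t := by
    rw [exponentialPDF_eq, exponentialPDF_eq]
    split_ifs
    · rw [← ENNReal.ofReal_mul (by positivity), ← ENNReal.ofReal_mul (by positivity), mul_assoc,
        ← exp_add]
      congr 1
      field_simp
      ring_nf
    · simp
  have hpdf : Measurable (exponentialPDF r) := (measurable_exponentialPDFReal r).ennreal_ofReal
  change ∫⁻ t, _ ∂volume.withDensity (exponentialPDF r) = _
  rw [lintegral_withDensity_eq_lintegral_mul _ hpdf (by fun_prop)]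
  simp_rw [Pi.mul_apply, density]
  rw [lintegral_const_mul' _ _ ENNReal.ofReal_ne_top,
    lintegral_exponentialPDF_eq_one hrs, mul_one]

noncomputable def sharedPoissonPair (a b c : ℝ≥0) : Measure (ℕ × ℕ) :=
  ((poissonMeasure a).prod ((poissonMeasure b).prod (poissonMeasure c))).map
    fun q => (q.1 + q.2.1, q.1 + q.2.2)

lemma measurable_sharedPoissonPair {α : Type*} [MeasurableSpace α] {a b c : α → ℝ≥0}
    (ha : Measurable a) (hb : Measurable b) (hc : Measurable c) :
    Measurable fun t => sharedPoissonPair (a t) (b t) (c t) := by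
  let κ : Kernel ℝ≥0 ℕ := ⟨poissonMeasure, measurable_poissonMeasure⟩
  have : IsMarkovKernel κ := ⟨fun r => inferInstanceAs (IsProbabilityMeasure (poissonMeasure r))⟩
  let g : ℕ × ℕ × ℕ → ℕ × ℕ := fun q => (q.1 + q.2.1, q.1 + q.2.2)
  let η := ((κ.comap a ha).prod ((κ.comap b hb).prod (κ.comap c hc))).map g
  convert η.measurable with t
  simp [η, Kernel.map_apply _ (measurable_of_countable g), Kernel.prod_apply, κ, sharedPoissonPair, g]

lemma map_fst_sharedPoissonPair (a b c : ℝ≥0) :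
    (sharedPoissonPair a b c).map Prod.fst = poissonMeasure (a + b) := by
  rw [sharedPoissonPair, Measure.map_map measurable_fst (measurable_of_countable _),
    ← poissonMeasure_conv_poissonMeasure, Measure.conv]
  have : (Prod.fst ∘ fun q : ℕ × ℕ × ℕ => (q.1 + q.2.1, q.1 + q.2.2))
      = (fun p : ℕ × ℕ => p.1 + p.2) ∘ Prod.map id Prod.fst := rfl
  rw [this, ← Measure.map_map (measurable_of_countable _) (measurable_of_countable _),
    ← Measure.map_prod_map _ _ measurable_id measurable_fst, Measure.map_id, Measure.map_fst_prod,
    measure_univ, one_smul]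

lemma map_snd_sharedPoissonPair (a b c : ℝ≥0) :
    (sharedPoissonPair a b c).map Prod.snd = poissonMeasure (a + c) := by
  rw [sharedPoissonPair, Measure.map_map measurable_snd (measurable_of_countable _),
    ← poissonMeasure_conv_poissonMeasure, Measure.conv]
  have : (Prod.snd ∘ fun q : ℕ × ℕ × ℕ => (q.1 + q.2.1, q.1 + q.2.2))
      = (fun p : ℕ × ℕ => p.1 + p.2) ∘ Prod.map id Prod.snd := rfl
  rw [this, ← Measure.map_map (measurable_of_countable _) (measurable_of_countable _),
    ← Measure.map_prod_map _ _ measurable_id measurable_snd, Measure.map_id, Measure.map_snd_prod,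
    measure_univ, one_smul]

lemma lintegral_mul_sharedPoissonPair (a b c : ℝ≥0) :
    ∫⁻ q, (q.1 : ℝ≥0∞) * q.2 ∂sharedPoissonPair a b c = (a + b) * (a + c) + a := by
  have given_shared (x : ℕ) : ∫⁻ p : ℕ × ℕ, ((x + p.1 : ℕ) : ℝ≥0∞) * ((x + p.2 : ℕ) : ℝ≥0∞)
      ∂(poissonMeasure b).prod (poissonMeasure c) = (x + b) * (x + c) := by
    simp_rw [Nat.cast_add, add_comm (x : ℝ≥0∞)]
    rw [lintegral_prod_mul (f := fun y : ℕ => (y : ℝ≥0∞) + x) (g := fun z : ℕ => (z : ℝ≥0∞) + x)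
      (by fun_prop) (by fun_prop), lintegral_natCast_add_poissonMeasure,
      lintegral_natCast_add_poissonMeasure]
  have expand (x : ℕ) : ((x : ℝ≥0∞) + b) * (x + c) = x * (x + c) + b * (x + c) := by ring
  rw [sharedPoissonPair, lintegral_map (by fun_prop) (measurable_of_countable _),
    lintegral_prod _ (by fun_prop)]
  simp_rw [given_shared, expand]
  rw [lintegral_add_left (by fun_prop), lintegral_natCast_mul_poissonMeasure,
    lintegral_const_mul _ (by fun_prop)]
  simp_rw [Nat.cast_add, Nat.cast_one, add_assoc, lintegral_natCast_add_poissonMeasure]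
  ring

section GeneContent

variable {θ ρ : ℝ}

noncomputable def geneContentGivenTime (θ ρ t : ℝ) : Measure (ℕ × ℕ) :=
  sharedPoissonPair (θ / ρ * exp (-ρ * t)).toNNReal (θ / ρ * (1 - exp (-ρ * t))).toNNReal
    (θ / ρ * (1 - exp (-ρ * t))).toNNReal

noncomputable def geneContentLaw (θ ρ : ℝ) : Measure (ℕ × ℕ) :=
  (expMeasure 1).bind (geneContentGivenTime θ ρ)

lemma measurable_geneContentGivenTime : Measurable (geneContentGivenTime θ ρ) :=
  measurable_sharedPoissonPair (measurable_real_toNNReal.comp (by fun_prop))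
    (measurable_real_toNNReal.comp (by fun_prop)) (measurable_real_toNNReal.comp (by fun_prop))

lemma map_fst_geneContentGivenTime (hθρ : 0 ≤ θ / ρ) (hρ : 0 ≤ ρ) {t : ℝ} (ht : 0 ≤ t) :
    (geneContentGivenTime θ ρ t).map Prod.fst = poissonMeasure (θ / ρ).toNNReal := by
  obtain ⟨h₀, h₁⟩ := exp_neg_mul_mem_Icc hρ ht
  rw [geneContentGivenTime, map_fst_sharedPoissonPair,
    Real.toNNReal_mul_add_toNNReal_mul_one_sub hθρ h₀ h₁]

lemma map_snd_geneContentGivenTime (hθρ : 0 ≤ θ / ρ) (hρ : 0 ≤ ρ) {t : ℝ} (ht : 0 ≤ t) :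
    (geneContentGivenTime θ ρ t).map Prod.snd = poissonMeasure (θ / ρ).toNNReal := by
  obtain ⟨h₀, h₁⟩ := exp_neg_mul_mem_Icc hρ ht
  rw [geneContentGivenTime, map_snd_sharedPoissonPair,
    Real.toNNReal_mul_add_toNNReal_mul_one_sub hθρ h₀ h₁]

lemma lintegral_mul_geneContentGivenTime (hθρ : 0 ≤ θ / ρ) (hρ : 0 ≤ ρ) {t : ℝ} (ht : 0 ≤ t) :
    ∫⁻ q, (q.1 : ℝ≥0∞) * q.2 ∂geneContentGivenTime θ ρ t
      = ENNReal.ofReal (θ / ρ) * ENNReal.ofReal (θ / ρ)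
        + ENNReal.ofReal (θ / ρ) * ENNReal.ofReal (exp (-ρ * t)) := by
  obtain ⟨h₀, h₁⟩ := exp_neg_mul_mem_Icc hρ ht
  rw [geneContentGivenTime, lintegral_mul_sharedPoissonPair, ← ENNReal.coe_add,
    Real.toNNReal_mul_add_toNNReal_mul_one_sub hθρ h₀ h₁]
  exact congrArg _ (ENNReal.ofReal_mul hθρ)

lemma map_fst_geneContentLaw (hθρ : 0 ≤ θ / ρ) (hρ : 0 ≤ ρ) :
    (geneContentLaw θ ρ).map Prod.fst = poissonMeasure (θ / ρ).toNNReal :=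
  have := isProbabilityMeasure_expMeasure one_pos
  Measure.map_bind_of_ae_map_eq measurable_geneContentGivenTime measurable_fst <| by
    filter_upwards [ae_nonneg_gammaMeasure 1 1] with t ht
    exact map_fst_geneContentGivenTime hθρ hρ ht

lemma map_snd_geneContentLaw (hθρ : 0 ≤ θ / ρ) (hρ : 0 ≤ ρ) :
    (geneContentLaw θ ρ).map Prod.snd = poissonMeasure (θ / ρ).toNNReal :=
  have := isProbabilityMeasure_expMeasure one_pos
  Measure.map_bind_of_ae_map_eq measurable_geneContentGivenTime measurable_snd <| by
    filter_upwards [ae_nonneg_gammaMeasure 1 1] with t ht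
    exact map_snd_geneContentGivenTime hθρ hρ ht

lemma lintegral_mul_geneContentLaw (hθρ : 0 ≤ θ / ρ) (hρ : 0 ≤ ρ) :
    ∫⁻ q, (q.1 : ℝ≥0∞) * q.2 ∂geneContentLaw θ ρ
      = ENNReal.ofReal (θ / ρ) * ENNReal.ofReal (θ / ρ)
        + ENNReal.ofReal (θ / ρ) * ENNReal.ofReal (1 / (1 + ρ)) := by
  have := isProbabilityMeasure_expMeasure one_pos
  rw [geneContentLaw, Measure.lintegral_bind measurable_geneContentGivenTime.aemeasurable
      (by fun_prop), lintegral_congr_ae (by filter_upwards [ae_nonneg_gammaMeasure 1 1] with t ht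
        using lintegral_mul_geneContentGivenTime hθρ hρ ht),
    lintegral_add_left measurable_const, lintegral_const, measure_univ, mul_one,
    lintegral_const_mul _ (by fun_prop),
    lintegral_exp_neg_mul_expMeasure one_pos (by linarith)]

lemma integral_mul_geneContentLaw (hθρ : 0 ≤ θ / ρ) (hρ : 0 ≤ ρ) :
    ∫ q, (q.1 : ℝ) * q.2 ∂geneContentLaw θ ρ = θ / ρ * (θ / ρ) + θ / ρ * (1 / (1 + ρ)) := by
  have h := integral_natCast_eq_toReal_lintegral (P := geneContentLaw θ ρ)
    (f := fun q => q.1 * q.2) (by fun_prop)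
  push_cast at h
  rw [h, lintegral_mul_geneContentLaw hθρ hρ, ENNReal.toReal_add (by finiteness) (by finiteness)]
  simp only [ENNReal.toReal_mul, ENNReal.toReal_ofReal hθρ,
    ENNReal.toReal_ofReal (by positivity : 0 ≤ 1 / (1 + ρ))]

end GeneContent

end ProbabilityTheory

/-- Proposition 4.2: the joint law of the gene numbers `(|𝒢ᵢ|, |𝒢ⱼ|)` of two sampled
individuals in the infinitely many genes model.  Draw the coalescence time `T ~ Exp(1)`;
given `T`, let `X, Y, Z` be independent Poisson with means `(θ/ρ)e^{-ρT}`,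
`(θ/ρ)(1-e^{-ρT})`, `(θ/ρ)(1-e^{-ρT})` and output `(X+Y, X+Z)`.  Then each marginal is
Poisson with mean `θ/ρ`, and the covariance of the two coordinates is `θ/(ρ(1+ρ))`. -/
theorem gene_content_two_individuals (θ ρ : ℝ) (hθ : 0 < θ) (hρ : 0 < ρ)
    (μ : Measure (ℕ × ℕ))
    (hμ : μ = (expMeasure 1).bind (fun t =>
      ((poissonMeasure ((θ / ρ * Real.exp (-ρ * t)).toNNReal)).prod
        ((poissonMeasure ((θ / ρ * (1 - Real.exp (-ρ * t))).toNNReal)).prod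
          (poissonMeasure ((θ / ρ * (1 - Real.exp (-ρ * t))).toNNReal)))).map
        (fun q : ℕ × ℕ × ℕ => (q.1 + q.2.1, q.1 + q.2.2)))) :
    μ.map Prod.fst = poissonMeasure (θ / ρ).toNNReal ∧
    μ.map Prod.snd = poissonMeasure (θ / ρ).toNNReal ∧
    (∫ q : ℕ × ℕ, (q.1 : ℝ) * (q.2 : ℝ) ∂μ) -
      (∫ q : ℕ × ℕ, (q.1 : ℝ) ∂μ) * (∫ q : ℕ × ℕ, (q.2 : ℝ) ∂μ) =
      θ / (ρ * (1 + ρ)) := by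
  have hθρ : 0 ≤ θ / ρ := (div_pos hθ hρ).le
  obtain rfl : μ = geneContentLaw θ ρ := hμ
  have hfst := map_fst_geneContentLaw hθρ hρ.le
  have hsnd := map_snd_geneContentLaw hθρ hρ.le
  refine ⟨hfst, hsnd, ?_⟩
  rw [integral_mul_geneContentLaw hθρ hρ.le,
    (HasLaw.mk (by fun_prop) hfst).integral_natCast_of_poissonMeasure,
    (HasLaw.mk (by fun_prop) hsnd).integral_natCast_of_poissonMeasure, Real.coe_toNNReal _ hθρ]
  field_simp
  ring
end

section
/- Let ρ, θ > 0 and let T₂, T₃ be independent random variables with T₂ ~ Exp(1) and T₃ ~ Exp(3). Then (θ²/ρ²)·( (2/3)·𝔼[(1−e^{−ρ(T₂+T₃)})(1−e^{−ρT₃})] + (1/3)·𝔼[(1−e^{−ρ(T₂+T₃)})²] ) − θ²/(1+ρ)² = θ²/((1+ρ)²(1+2ρ)(3+2ρ)). (Key computation in the proof of Proposition 5.7: averaging the product of conditional expectations 𝔼[|𝒢_i∖𝒢_j| | 𝒯]·𝔼[|𝒢_i∖𝒢_k| | 𝒯] over the three equally likely topologies of the Kingman coalescent of three individuals, where T₂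 and T₃ are the times during which the coalescent has 2 and 3 lines, gives the common θ²-part of the covariances in Proposition 5.7.) -/
/-!
Expanding the two products, every term is of the form `exp (-(a * T₂ + b * T₃))`, whose
expectation factorises into the Laplace transforms `r / (r + a)` of the exponential laws.
What remains is an identity between rational functions of `ρ`.
-/

open MeasureTheory ProbabilityTheory Real Set

lemma integral_one_sub_mul_one_sub {α : Type*} [MeasurableSpace α] {μ : Measure α}
    [IsProbabilityMeasure μ] {f g : α → ℝ} (hf : Integrable f μ) (hg : Integrable g μ)
    (hfg : Integrable (fun x => f x * g x) μ) :
    ∫ x, (1 - f x) * (1 - g x) ∂μ = 1 - ∫ x, f x ∂μ - ∫ x, g x ∂μ + ∫ x, f x * g x ∂μ := by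
  have h1 : Integrable (fun _ => (1 : ℝ)) μ := integrable_const 1
  have h1f : Integrable (fun x => 1 - f x) μ := h1.sub hf
  have h1fg : Integrable (fun x => 1 - f x - g x) μ := h1f.sub hg
  simp_rw [show ∀ x, (1 - f x) * (1 - g x) = 1 - f x - g x + f x * g x from fun x => by ring]
  rw [integral_add h1fg hfg, integral_sub h1f hg, integral_sub h1 hf, integral_const,
    probReal_univ, one_smul]

namespace ProbabilityTheory

variable {r s a b c d : ℝ}

lemma expMeasure_eq_withDensity (r : ℝ) :
    expMeasure r = volume.withDensity (fun x => ENNReal.ofReal (exponentialPDFReal r x)) :=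
  rfl

lemma exponentialPDFReal_mul_exp_neg_mul (r a x : ℝ) :
    exponentialPDFReal r x * exp (-(a * x))
      = (Ici 0).indicator (fun x => r * exp (-(r + a) * x)) x := by
  by_cases hx : 0 ≤ x
  · rw [indicator_of_mem (mem_Ici.2 hx), exponentialPDFReal, gammaPDFReal, if_pos hx]
    simp only [rpow_one, Gamma_one, div_one, sub_self, rpow_zero, mul_one, mul_assoc, ← exp_add]
    ring_nf
  · rw [indicator_of_notMem (fun h => hx (mem_Ici.1 h)), exponentialPDFReal, gammaPDFReal,
      if_neg hx, zero_mul]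

lemma integrable_exp_neg_mul_expMeasure (hr : 0 < r) (ha : -r < a) :
    Integrable (fun x => exp (-(a * x))) (expMeasure r) := by
  rw [expMeasure_eq_withDensity, integrable_withDensity_iff_integrable_smul'
    (measurable_exponentialPDFReal r).ennreal_ofReal (ae_of_all _ fun _ => ENNReal.ofReal_lt_top)]
  simp_rw [ENNReal.toReal_ofReal (exponentialPDFReal_nonneg hr _), smul_eq_mul,
    exponentialPDFReal_mul_exp_neg_mul]
  rw [integrable_indicator_iff measurableSet_Ici, integrableOn_Ici_iff_integrableOn_Ioi]
  exact (integrableOn_exp_mul_Ioi (by linarith) 0).const_mul r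

lemma integral_exp_neg_mul_expMeasure (hr : 0 < r) (ha : -r < a) :
    ∫ x, exp (-(a * x)) ∂(expMeasure r) = r / (r + a) := by
  rw [expMeasure_eq_withDensity, integral_withDensity_eq_integral_toReal_smul
    (measurable_exponentialPDFReal r).ennreal_ofReal (ae_of_all _ fun _ => ENNReal.ofReal_lt_top)]
  simp_rw [ENNReal.toReal_ofReal (exponentialPDFReal_nonneg hr _), smul_eq_mul,
    exponentialPDFReal_mul_exp_neg_mul]
  rw [integral_indicator measurableSet_Ici, integral_Ici_eq_integral_Ioi, integral_const_mul,
    integral_exp_mul_Ioi (by linarith) 0]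
  field_simp
  simp

lemma integrable_exp_neg_expMeasure_prod (hr : 0 < r) (hs : 0 < s) (ha : -r < a) (hb : -s < b) :
    Integrable (fun p : ℝ × ℝ => exp (-(a * p.1 + b * p.2)))
      ((expMeasure r).prod (expMeasure s)) := by
  have := isProbabilityMeasure_expMeasure hr
  have := isProbabilityMeasure_expMeasure hs
  simp_rw [neg_add, exp_add]
  exact (integrable_exp_neg_mul_expMeasure hr ha).mul_prod
    (integrable_exp_neg_mul_expMeasure hs hb)

lemma integral_exp_neg_expMeasure_prod (hr : 0 < r) (hs : 0 < s) (ha : -r < a) (hb : -s < b) :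
    ∫ p : ℝ × ℝ, exp (-(a * p.1 + b * p.2)) ∂((expMeasure r).prod (expMeasure s))
      = r / (r + a) * (s / (s + b)) := by
  have := isProbabilityMeasure_expMeasure hr
  have := isProbabilityMeasure_expMeasure hs
  simp_rw [neg_add, exp_add]
  rw [integral_prod_mul (fun x => exp (-(a * x))) (fun y => exp (-(b * y))),
    integral_exp_neg_mul_expMeasure hr ha, integral_exp_neg_mul_expMeasure hs hb]

lemma integral_one_sub_exp_mul_one_sub_exp_expMeasure_prod (hr : 0 < r) (hs : 0 < s)
    (ha : 0 ≤ a) (hb : 0 ≤ b) (hc : 0 ≤ c) (hd : 0 ≤ d) :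
    ∫ p : ℝ × ℝ, (1 - exp (-(a * p.1 + b * p.2))) * (1 - exp (-(c * p.1 + d * p.2)))
        ∂((expMeasure r).prod (expMeasure s))
      = 1 - r / (r + a) * (s / (s + b)) - r / (r + c) * (s / (s + d))
          + r / (r + (a + c)) * (s / (s + (b + d))) := by
  have := isProbabilityMeasure_expMeasure hr
  have := isProbabilityMeasure_expMeasure hs
  have hmul : ∀ p : ℝ × ℝ, exp (-(a * p.1 + b * p.2)) * exp (-(c * p.1 + d * p.2))
      = exp (-((a + c) * p.1 + (b + d) * p.2)) := fun p => by rw [← exp_add]; ring_nf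
  have hint : ∀ {u v : ℝ}, 0 ≤ u → 0 ≤ v →
      Integrable (fun p : ℝ × ℝ => exp (-(u * p.1 + v * p.2)))
        ((expMeasure r).prod (expMeasure s)) := fun hu hv =>
    integrable_exp_neg_expMeasure_prod hr hs (by linarith) (by linarith)
  have hval : ∀ {u v : ℝ}, 0 ≤ u → 0 ≤ v → ∫ p : ℝ × ℝ, exp (-(u * p.1 + v * p.2))
      ∂((expMeasure r).prod (expMeasure s)) = r / (r + u) * (s / (s + v)) := fun hu hv =>
    integral_exp_neg_expMeasure_prod hr hs (by linarith) (by linarith)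
  simp_rw [integral_one_sub_mul_one_sub (hint ha hb) (hint hc hd)
    (by simpa only [hmul] using hint (add_nonneg ha hc) (add_nonneg hb hd)), hmul,
    hval ha hb, hval hc hd, hval (add_nonneg ha hc) (add_nonneg hb hd)]

end ProbabilityTheory

theorem three_individuals_covariance_term_general (θ ρ : ℝ) (hρ : 0 < ρ) :
    θ ^ 2 / ρ ^ 2 *
      ((2 / 3) * ∫ p : ℝ × ℝ, (1 - Real.exp (-ρ * (p.1 + p.2))) *
          (1 - Real.exp (-ρ * p.2)) ∂((expMeasure 1).prod (expMeasure 3)) +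
        (1 / 3) * ∫ p : ℝ × ℝ, (1 - Real.exp (-ρ * (p.1 + p.2))) ^ 2
          ∂((expMeasure 1).prod (expMeasure 3))) -
      θ ^ 2 / (1 + ρ) ^ 2 =
    θ ^ 2 / ((1 + ρ) ^ 2 * (1 + 2 * ρ) * (3 + 2 * ρ)) := by
  have hcross : ∀ p : ℝ × ℝ, (1 - exp (-ρ * (p.1 + p.2))) * (1 - exp (-ρ * p.2))
      = (1 - exp (-(ρ * p.1 + ρ * p.2))) * (1 - exp (-(0 * p.1 + ρ * p.2))) := fun p => by
    ring_nf
  have hsquare : ∀ p : ℝ × ℝ, (1 - exp (-ρ * (p.1 + p.2))) ^ 2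
      = (1 - exp (-(ρ * p.1 + ρ * p.2))) * (1 - exp (-(ρ * p.1 + ρ * p.2))) := fun p => by
    ring_nf
  simp_rw [hcross, hsquare, integral_one_sub_exp_mul_one_sub_exp_expMeasure_prod one_pos three_pos
    hρ.le hρ.le le_rfl hρ.le, integral_one_sub_exp_mul_one_sub_exp_expMeasure_prod one_pos
    three_pos hρ.le hρ.le hρ.le hρ.le]
  field_simp
  ring

/-- Key computation in the proof of Proposition 5.7: averaging the product of
conditional expectations over the three equally likely topologies of the Kingman
coalescent of three individuals, where `T₂ ~ Exp(1)` and `T₃ ~ Exp(3)` are the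
holding times with 2 and 3 lines. -/
theorem three_individuals_covariance_term (θ ρ : ℝ) (hθ : 0 < θ) (hρ : 0 < ρ) :
    θ ^ 2 / ρ ^ 2 *
      ((2 / 3) * ∫ p : ℝ × ℝ, (1 - Real.exp (-ρ * (p.1 + p.2))) *
          (1 - Real.exp (-ρ * p.2)) ∂((expMeasure 1).prod (expMeasure 3)) +
        (1 / 3) * ∫ p : ℝ × ℝ, (1 - Real.exp (-ρ * (p.1 + p.2))) ^ 2
          ∂((expMeasure 1).prod (expMeasure 3))) -
      θ ^ 2 / (1 + ρ) ^ 2 =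
    θ ^ 2 / ((1 + ρ) ^ 2 * (1 + 2 * ρ) * (3 + 2 * ρ)) :=
  three_individuals_covariance_term_general θ ρ hρ
end

section
/- Let ρ, θ > 0 and let T₂, T₃, T₄ be independent random variables with T₂ ~ Exp(1), T₃ ~ Exp(3), T₄ ~ Exp(6). For nonnegative integers a, b, c write E(a,b,c) for the random variable exp(−(ρ/2)(a·T₂ + b·T₃ + c·T₄)), and define c₁ = E(0,0,2) − E(0,2,3) − E(2,2,3) + E(2,3,4), c₂ = E(0,2,2) − E(0,2,3) − E(2,3,3) + E(2,3,4), c₃ = E(2,2,2) − E(2,2,3) − E(2,3,3) + E(2,3,4), c₄ = E(2,2,2) − 2·E(2,3,3) + E(2,3,4), c₅ = E(0,0,2) − 2·E(2,2,3) + E(2,3,4), c₆ = E(0,2,2) − 2·E(2,3,3) + E(2,3,4). Then (θ²/(18ρ²))·𝔼[ 2c₁c₂ + 2c₁c₃ + 2c₂c₃ + c₂² + 3c₃² + 2c₂c₄ + 2c₃c₄ + 2c₃c₅ + 2c₃c₆ ] = (θ²ρ/4)·(18 + 117(ρ/2) + 203(ρ/2)² + 105(ρ/2)³) / ( (1+ρ/2)²·(1+2(ρ/2))·(1+4(ρ/2))·(3+4(ρ/2))·(3+5(ρ/2))·(6+5(ρ/2))·(6+7(ρ/2))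 ). (Theorem 3: the expected number of incongruent pairs of genes 𝔼[P] in the infinitely many genes model, obtained by averaging 𝔼[D_{ij,kl} | 𝒯]·𝔼[D_{ik,jl} | 𝒯] over the 18 equally likely topologies of the Kingman coalescent of four individuals, where T₂, T₃, T₄ are the times during which the coalescent has 2, 3 and 4 lines.) -/
open MeasureTheory ProbabilityTheory
open scoped ENNReal NNReal

/-- `E(a,b,c) = exp(-(ρ/2)(a·T₂ + b·T₃ + c·T₄))` as a function of `(T₂, T₃, T₄)`. -/
noncomputable def coalE (ρ : ℝ) (a b c : ℕ) (p : ℝ × ℝ × ℝ) : ℝ :=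
  Real.exp (-(ρ / 2) * ((a : ℝ) * p.1 + (b : ℝ) * p.2.1 + (c : ℝ) * p.2.2))

/-- The six possible values of `(ρ/θ)·𝔼[D_{ij,kl} | 𝒯]` over the tree topologies. -/
noncomputable def coalC1 (ρ : ℝ) (p : ℝ × ℝ × ℝ) : ℝ :=
  coalE ρ 0 0 2 p - coalE ρ 0 2 3 p - coalE ρ 2 2 3 p + coalE ρ 2 3 4 p

noncomputable def coalC2 (ρ : ℝ) (p : ℝ × ℝ × ℝ) : ℝ :=
  coalE ρ 0 2 2 p - coalE ρ 0 2 3 p - coalE ρ 2 3 3 p + coalE ρ 2 3 4 p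

noncomputable def coalC3 (ρ : ℝ) (p : ℝ × ℝ × ℝ) : ℝ :=
  coalE ρ 2 2 2 p - coalE ρ 2 2 3 p - coalE ρ 2 3 3 p + coalE ρ 2 3 4 p

noncomputable def coalC4 (ρ : ℝ) (p : ℝ × ℝ × ℝ) : ℝ :=
  coalE ρ 2 2 2 p - 2 * coalE ρ 2 3 3 p + coalE ρ 2 3 4 p

noncomputable def coalC5 (ρ : ℝ) (p : ℝ × ℝ × ℝ) : ℝ :=
  coalE ρ 0 0 2 p - 2 * coalE ρ 2 2 3 p + coalE ρ 2 3 4 p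

noncomputable def coalC6 (ρ : ℝ) (p : ℝ × ℝ × ℝ) : ℝ :=
  coalE ρ 0 2 2 p - 2 * coalE ρ 2 3 3 p + coalE ρ 2 3 4 p


/-! Each `cᵢ` is a linear combination of the monomials `E(a,b,c) = x^a y^b z^c` in
`x = e^{-ρT₂/2}`, `y = e^{-ρT₃/2}`, `z = e^{-ρT₄/2}`, so the integrand is a polynomial in
`x, y, z`. By independence a monomial has expectation `∏ r / (r + k ρ/2)`, a product of values
of the Laplace transform of `Exp(r)`, and the theorem becomes an identity of rational functions
of `ρ`. -/

open Real

lemma integral_exp_mul_expMeasure {r t : ℝ} (hr : 0 < r) (ht : t < r) :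
    ∫ x, exp (t * x) ∂expMeasure r = r / (r - t) := by
  have hdens : Measurable fun x => (gammaPDFReal 1 r x).toNNReal :=
    (measurable_gammaPDFReal 1 r).real_toNNReal
  have hpointwise : ∀ x, (gammaPDFReal 1 r x).toNNReal • exp (t * x) =
      Set.indicator (Set.Ici 0) (fun x => r * exp ((t - r) * x)) x := by
    intro x
    rw [NNReal.smul_def, Real.coe_toNNReal', gammaPDFReal]
    simp only [rpow_one, Gamma_one, div_one, sub_self, rpow_zero, mul_one]
    split_ifs with hx
    · rw [Set.indicator_of_mem (Set.mem_Ici.2 hx), max_eq_left (by positivity), smul_eq_mul,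
        mul_assoc, ← exp_add]
      congr 2
      ring
    · simp [hx]
  have hgamma : gammaPDF 1 r = fun x => ((gammaPDFReal 1 r x).toNNReal : ℝ≥0∞) := rfl
  rw [expMeasure, gammaMeasure, hgamma, integral_withDensity_eq_integral_smul hdens,
    integral_congr_ae (.of_forall hpointwise), integral_indicator measurableSet_Ici,
    integral_Ici_eq_integral_Ioi, integral_const_mul, integral_exp_mul_Ioi (by linarith),
    mul_zero, exp_zero, ← neg_sub r t, div_neg, neg_div, neg_neg, mul_one_div]

lemma integrable_exp_mul_expMeasure {r t : ℝ} (hr : 0 < r) (ht : t < r) :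
    Integrable (fun x => exp (t * x)) (expMeasure r) :=
  .of_integral_ne_zero <| by
    rw [integral_exp_mul_expMeasure hr ht]
    exact div_ne_zero hr.ne' (sub_pos.2 ht).ne'

instance (r : ℝ) : SFinite (expMeasure r) := by
  unfold expMeasure gammaMeasure
  infer_instance

local notation "𝕋" =>
  Measure.prod (expMeasure 1) (Measure.prod (expMeasure 3) (expMeasure 6))

lemma coalE_eq_mul (ρ : ℝ) (a b c : ℕ) (p : ℝ × ℝ × ℝ) :
    coalE ρ a b c p = exp (-(a * (ρ / 2)) * p.1) *
      (exp (-(b * (ρ / 2)) * p.2.1) * exp (-(c * (ρ / 2)) * p.2.2)) := by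
  rw [coalE, ← exp_add, ← exp_add]
  congr 1
  ring

lemma coalE_eq_pow (ρ : ℝ) (a b c : ℕ) (p : ℝ × ℝ × ℝ) :
    coalE ρ a b c p = exp (-(ρ / 2) * p.1) ^ a * exp (-(ρ / 2) * p.2.1) ^ b *
      exp (-(ρ / 2) * p.2.2) ^ c := by
  rw [coalE, ← exp_nat_mul, ← exp_nat_mul, ← exp_nat_mul, ← exp_add, ← exp_add]
  congr 1
  ring

noncomputable def coalESum (ρ : ℝ) : List (ℝ × ℕ × ℕ × ℕ) → ℝ × ℝ × ℝ → ℝ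
  | [] => fun _ => 0
  | (k, a, b, c) :: L => fun p => k * coalE ρ a b c p + coalESum ρ L p

section

variable {ρ : ℝ} (hρ : 0 ≤ ρ)
include hρ

lemma integrable_coalE (a b c : ℕ) : Integrable (coalE ρ a b c) 𝕋 := by
  have hint (r : ℝ) (hr : 0 < r) (n : ℕ) :
      Integrable (fun x => exp (-(n * (ρ / 2)) * x)) (expMeasure r) :=
    integrable_exp_mul_expMeasure hr (by nlinarith [n.cast_nonneg (α := ℝ)])
  simp_rw [funext (coalE_eq_mul ρ a b c)]
  exact (hint 1 one_pos a).mul_prod ((hint 3 three_pos b).mul_prod (hint 6 (by norm_num) c))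

lemma integral_coalE (a b c : ℕ) :
    ∫ p, coalE ρ a b c p ∂𝕋 =
      1 / (1 + a * (ρ / 2)) * (3 / (3 + b * (ρ / 2))) * (6 / (6 + c * (ρ / 2))) := by
  have hmoment (r : ℝ) (hr : 0 < r) (n : ℕ) :
      ∫ x, exp (-(n * (ρ / 2)) * x) ∂expMeasure r = r / (r + n * (ρ / 2)) := by
    rw [integral_exp_mul_expMeasure hr (by nlinarith [n.cast_nonneg (α := ℝ)]), sub_neg_eq_add]
  simp_rw [coalE_eq_mul ρ a b c]
  rw [integral_prod_mul (fun x => exp (-(a * (ρ / 2)) * x))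
      (fun q : ℝ × ℝ => exp (-(b * (ρ / 2)) * q.1) * exp (-(c * (ρ / 2)) * q.2)),
    integral_prod_mul (fun x => exp (-(b * (ρ / 2)) * x)) (fun x => exp (-(c * (ρ / 2)) * x)),
    hmoment 1 one_pos, hmoment 3 three_pos, hmoment 6 (by norm_num)]
  ring

lemma integrable_coalESum : ∀ L, Integrable (coalESum ρ L) 𝕋
  | [] => integrable_zero _ _ _
  | (k, a, b, c) :: L => ((integrable_coalE hρ a b c).const_mul k).add (integrable_coalESum L)

lemma integral_coalESum : ∀ L, ∫ p, coalESum ρ L p ∂𝕋 =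
    (L.map fun q => q.1 * ∫ p, coalE ρ q.2.1 q.2.2.1 q.2.2.2 p ∂𝕋).sum
  | [] => by simp [coalESum]
  | (k, a, b, c) :: L => by
    rw [coalESum,
      integral_add ((integrable_coalE hρ a b c).const_mul k) (integrable_coalESum hρ L),
      integral_const_mul, integral_coalESum L, List.map_cons, List.sum_cons]

end

/-- The integrand of `expected_incongruent_pairs` expanded as a polynomial in
`e^{-ρT₂/2}, e^{-ρT₃/2}, e^{-ρT₄/2}`; the term `(k, a, b, c)` stands for `k · E(a,b,c)`. -/
def incongruentPairsTerms : List (ℝ × ℕ × ℕ × ℕ) :=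
  [(2, 0, 2, 4), (-2, 0, 2, 5), (1, 0, 4, 4), (-4, 0, 4, 5), (3, 0, 4, 6), (4, 2, 2, 4),
   (-4, 2, 2, 5), (-6, 2, 3, 5), (6, 2, 3, 6), (6, 2, 4, 4), (-12, 2, 4, 5), (6, 2, 4, 6),
   (-10, 2, 5, 5), (22, 2, 5, 6), (-12, 2, 5, 7), (5, 4, 4, 4), (-14, 4, 4, 5), (9, 4, 4, 6),
   (-20, 4, 5, 5), (44, 4, 5, 6), (-24, 4, 5, 7), (18, 4, 6, 6), (-36, 4, 6, 7), (18, 4, 6, 8)]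

lemma incongruentPairs_integrand_eq (ρ : ℝ) :
    (fun p => 2 * coalC1 ρ p * coalC2 ρ p + 2 * coalC1 ρ p * coalC3 ρ p +
      2 * coalC2 ρ p * coalC3 ρ p + coalC2 ρ p ^ 2 + 3 * coalC3 ρ p ^ 2 +
      2 * coalC2 ρ p * coalC4 ρ p + 2 * coalC3 ρ p * coalC4 ρ p +
      2 * coalC3 ρ p * coalC5 ρ p + 2 * coalC3 ρ p * coalC6 ρ p) =
    coalESum ρ incongruentPairsTerms := by
  ext p
  simp only [incongruentPairsTerms, coalESum, coalC1, coalC2, coalC3, coalC4, coalC5, coalC6,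
    coalE_eq_pow]
  ring

theorem expected_incongruent_pairs_general (θ ρ : ℝ) (hρ : 0 < ρ) :
    θ ^ 2 / (18 * ρ ^ 2) *
      (∫ p : ℝ × ℝ × ℝ,
          (2 * coalC1 ρ p * coalC2 ρ p + 2 * coalC1 ρ p * coalC3 ρ p +
            2 * coalC2 ρ p * coalC3 ρ p + coalC2 ρ p ^ 2 + 3 * coalC3 ρ p ^ 2 +
            2 * coalC2 ρ p * coalC4 ρ p + 2 * coalC3 ρ p * coalC4 ρ p +
            2 * coalC3 ρ p * coalC5 ρ p + 2 * coalC3 ρ p * coalC6 ρ p)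
        ∂((expMeasure 1).prod ((expMeasure 3).prod (expMeasure 6)))) =
    θ ^ 2 * ρ / 4 *
      (18 + 117 * (ρ / 2) + 203 * (ρ / 2) ^ 2 + 105 * (ρ / 2) ^ 3) /
      ((1 + ρ / 2) ^ 2 * (1 + 2 * (ρ / 2)) * (1 + 4 * (ρ / 2)) * (3 + 4 * (ρ / 2)) *
        (3 + 5 * (ρ / 2)) * (6 + 5 * (ρ / 2)) * (6 + 7 * (ρ / 2))) := by
  rw [incongruentPairs_integrand_eq, integral_coalESum hρ.le]
  simp only [incongruentPairsTerms, List.map_cons, List.map_nil, List.sum_cons, List.sum_nil,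
    integral_coalE hρ.le]
  push_cast
  field_simp
  ring

/-- Theorem 3: the expected number of incongruent pairs of genes `𝔼[P]` in the
infinitely many genes model, obtained by averaging `𝔼[D_{ij,kl}|𝒯]·𝔼[D_{ik,jl}|𝒯]`
over the 18 equally likely topologies of the Kingman coalescent of four individuals,
where `T₂ ~ Exp(1)`, `T₃ ~ Exp(3)`, `T₄ ~ Exp(6)` are the holding times with 2, 3 and
4 lines. -/
theorem expected_incongruent_pairs (θ ρ : ℝ) (hθ : 0 < θ) (hρ : 0 < ρ) :
    θ ^ 2 / (18 * ρ ^ 2) *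
      (∫ p : ℝ × ℝ × ℝ,
          (2 * coalC1 ρ p * coalC2 ρ p + 2 * coalC1 ρ p * coalC3 ρ p +
            2 * coalC2 ρ p * coalC3 ρ p + coalC2 ρ p ^ 2 + 3 * coalC3 ρ p ^ 2 +
            2 * coalC2 ρ p * coalC4 ρ p + 2 * coalC3 ρ p * coalC4 ρ p +
            2 * coalC3 ρ p * coalC5 ρ p + 2 * coalC3 ρ p * coalC6 ρ p)
        ∂((expMeasure 1).prod ((expMeasure 3).prod (expMeasure 6)))) =
    θ ^ 2 * ρ / 4 *
      (18 + 117 * (ρ / 2) + 203 * (ρ / 2) ^ 2 + 105 * (ρ / 2) ^ 3) /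
      ((1 + ρ / 2) ^ 2 * (1 + 2 * (ρ / 2)) * (1 + 4 * (ρ / 2)) * (3 + 4 * (ρ / 2)) *
        (3 + 5 * (ρ / 2)) * (6 + 5 * (ρ / 2)) * (6 + 7 * (ρ / 2))) :=
  expected_incongruent_pairs_general θ ρ hρ
end

section
/- For every real ρ > 0 and every natural number n ≥ 1, Σ_{k=1}^{n} (1/k) · Π_{j=1}^{k} ( (n−j+1)/(n−j+ρ) ) = Σ_{i=0}^{n−1} 1/(ρ+i). Equivalently, summing the gene frequency spectrum of Theorem 5, 𝔼[G_k] = (θ/k)·n(n−1)⋯(n−k+1)/((n−1+ρ)(n−2+ρ)⋯(n−k+ρ)), over k = 1,…,n yields the expected size of the dispensable genome 𝔼[G] = θ Σ_{i=0}^{n−1} 1/(ρ+i) of Theorem 4. -/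
/-!
Write `c_m = (ρ)_m / m!` for the coefficients of `(1 - x)^{-ρ}`. The product over `j` equals
`c_{n-k} / c_n`, so the identity says that `A_n = ∑_{m<n} c_m / (n - m)`, the coefficient of `x^n`
in `-log (1 - x) (1 - x)^{-ρ} = ∂_ρ (1 - x)^{-ρ}`, equals `c_n ∑_{i<n} 1 / (ρ + i) = ∂_ρ c_n`.
Instead of differentiating in `ρ`, compare coefficients in `(1 - x) A' = (1 - x)^{-ρ} + ρ A`:
both sides satisfy `(n + 1) A_{n+1} = (n + ρ) A_n + c_n` and vanish at `n = 0`.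
-/

open Finset

section

variable {K : Type*} [Field K]

/-- `(ρ)_m / m!`, the coefficient of `x^m` in `(1 - x)^{-ρ}`. -/
def negBinomCoeff (ρ : K) (m : ℕ) : K :=
  ∏ i ∈ range m, (ρ + i) / (i + 1)

theorem negBinomCoeff_succ (ρ : K) (m : ℕ) :
    negBinomCoeff ρ (m + 1) = negBinomCoeff ρ m * ((ρ + m) / (m + 1)) :=
  prod_range_succ _ _

theorem sum_Icc_div_eq_sum_range (f : ℕ → K) (n : ℕ) :
    ∑ k ∈ Icc 1 n, f (n - k) / k = ∑ m ∈ range n, f m / (n - m) := by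
  rw [← Ico_add_one_right_eq_Icc, ← Nat.Ico_zero_eq_range]
  have reflect := sum_Ico_reflect (fun m => f m / ((n : K) - m)) 1 (le_refl (n + 1))
  simp only [Nat.add_sub_cancel, Nat.sub_self] at reflect
  rw [← reflect]
  refine sum_congr rfl fun k hk => ?_
  rw [Nat.cast_sub (by simp at hk; omega), sub_sub_cancel]

variable [CharZero K]

theorem succ_mul_negBinomCoeff_succ (ρ : K) (m : ℕ) :
    ((m : K) + 1) * negBinomCoeff ρ (m + 1) = (ρ + m) * negBinomCoeff ρ m := by
  rw [negBinomCoeff_succ]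
  field_simp

theorem negBinomCoeff_ne_zero {ρ : K} (hρ : ∀ i : ℕ, ρ + i ≠ 0) (m : ℕ) :
    negBinomCoeff ρ m ≠ 0 :=
  prod_ne_zero_iff.2 fun i _ => div_ne_zero (hρ i) (Nat.cast_add_one_ne_zero i)

theorem succ_mul_sum_negBinomCoeff_div (ρ : K) (n : ℕ) :
    ((n : K) + 1) * ∑ m ∈ range (n + 1), negBinomCoeff ρ m / (n + 1 - m) =
      (n + ρ) * ∑ m ∈ range n, negBinomCoeff ρ m / (n - m) + negBinomCoeff ρ n := by
  have split : ∀ m ∈ range (n + 1), ((n : K) + 1) * (negBinomCoeff ρ m / (n + 1 - m)) =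
      negBinomCoeff ρ m + m * negBinomCoeff ρ m / (n + 1 - m) := by
    intro m hm
    have : (n : K) + 1 - m ≠ 0 := by
      rw [sub_ne_zero]; exact_mod_cast (mem_range.1 hm).ne'
    field_simp
    ring
  have shift : ∀ m ∈ range n,
      ((m + 1 : ℕ) : K) * negBinomCoeff ρ (m + 1) / (n + 1 - (m + 1 : ℕ)) =
        (n + ρ) * (negBinomCoeff ρ m / (n - m)) - negBinomCoeff ρ m := by
    intro m hm
    have : (n : K) - m ≠ 0 := by
      rw [sub_ne_zero]; exact_mod_cast (mem_range.1 hm).ne'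
    push_cast
    rw [succ_mul_negBinomCoeff_succ, add_sub_add_right_eq_sub]
    field_simp
    ring
  rw [mul_sum, sum_congr rfl split, sum_add_distrib, sum_range_succ' (fun m => (m : K) * _ / _),
    sum_congr rfl shift, sum_sub_distrib, ← mul_sum, sum_range_succ]
  simp only [Nat.cast_zero, zero_mul, zero_div, add_zero]
  ring

theorem sum_negBinomCoeff_div_sub {ρ : K} (hρ : ∀ i : ℕ, ρ + i ≠ 0) (n : ℕ) :
    ∑ m ∈ range n, negBinomCoeff ρ m / (n - m) =
      negBinomCoeff ρ n * ∑ i ∈ range n, 1 / (ρ + i) := by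
  induction n with
  | zero => simp
  | succ n ih =>
    apply mul_left_cancel₀ (Nat.cast_add_one_ne_zero n : ((n : K) + 1) ≠ 0)
    rw [Nat.cast_succ, succ_mul_sum_negBinomCoeff_div, ih,
      ← mul_assoc _ (negBinomCoeff ρ (n + 1)), succ_mul_negBinomCoeff_succ, sum_range_succ]
    field_simp [hρ n]
    ring

theorem prod_Icc_eq_negBinomCoeff_div {ρ : K} (hρ : ∀ i : ℕ, ρ + i ≠ 0) (m k : ℕ) :
    ∏ j ∈ Icc 1 k, (((m + k : ℕ) : K) - j + 1) / ((m + k : ℕ) - j + ρ) =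
      negBinomCoeff ρ m / negBinomCoeff ρ (m + k) := by
  induction k generalizing m with
  | zero => simp [div_self (negBinomCoeff_ne_zero hρ m)]
  | succ k ih =>
    rw [prod_Icc_succ_top (by omega), ← add_assoc, add_right_comm, ih]
    have top : ((m + 1 + k : ℕ) : K) - (k + 1 : ℕ) = m := by push_cast; ring
    have hm : (m : K) + ρ ≠ 0 := add_comm ρ m ▸ hρ m
    rw [top, negBinomCoeff_succ]
    field_simp [negBinomCoeff_ne_zero hρ]
    ring

end

theorem sum_gene_frequency_spectrum_general (ρ : ℝ) (hρ : 0 < ρ) (n : ℕ) :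
    ∑ k ∈ Finset.Icc 1 n, (1 / (k : ℝ)) *
        ∏ j ∈ Finset.Icc 1 k, (((n : ℝ) - (j : ℝ) + 1) / ((n : ℝ) - (j : ℝ) + ρ)) =
      ∑ i ∈ Finset.range n, 1 / (ρ + (i : ℝ)) := by
  have hρne : ∀ i : ℕ, ρ + i ≠ 0 := fun i => by positivity
  calc _ = ∑ k ∈ Icc 1 n, negBinomCoeff ρ (n - k) / k / negBinomCoeff ρ n := by
        refine sum_congr rfl fun k hk => ?_
        obtain ⟨m, rfl⟩ := Nat.exists_eq_add_of_le' (mem_Icc.1 hk).2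
        rw [prod_Icc_eq_negBinomCoeff_div hρne, Nat.add_sub_cancel]
        ring
    _ = (∑ m ∈ range n, negBinomCoeff ρ m / (n - m)) / negBinomCoeff ρ n := by
        rw [← sum_div, sum_Icc_div_eq_sum_range]
    _ = _ := by
        rw [sum_negBinomCoeff_div_sub hρne,
          mul_div_cancel_left₀ _ (negBinomCoeff_ne_zero hρne n)]

/-- Summing the gene frequency spectrum of Theorem 5 over `k = 1,…,n` yields the
expected size of the dispensable genome of Theorem 4 (stated with the common factor
`θ` removed):
`Σ_{k=1}^{n} (1/k) Π_{j=1}^{k} (n-j+1)/(n-j+ρ) = Σ_{i=0}^{n-1} 1/(ρ+i)`. -/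
theorem sum_gene_frequency_spectrum (ρ : ℝ) (hρ : 0 < ρ) (n : ℕ) (hn : 1 ≤ n) :
    ∑ k ∈ Finset.Icc 1 n, (1 / (k : ℝ)) *
        ∏ j ∈ Finset.Icc 1 k, (((n : ℝ) - (j : ℝ) + 1) / ((n : ℝ) - (j : ℝ) + ρ)) =
      ∑ i ∈ Finset.range n, 1 / (ρ + (i : ℝ)) :=
  sum_gene_frequency_spectrum_general ρ hρ n
end
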